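/- arXiv:2112.12862 — 2 statements merged into one kernel-verified Lean document; each statement's English description precedes it below -/
import Mathlib

section
/- Let P be a rank-one projector P = |n⟩⟨m|/⟨m|n⟩ on ℂ^{2n+1} with ⟨m|S₀|m⟩ = ⟨n|S₀|n⟩ = 0 and ⟨m|n⟩ ≠ 0, let P̄ = S₀PᵀS₀, and let c ∈ ℂ, c ≠ 0. Then the dressing factor u = I + (c−1)P + (c⁻¹−1)P̄ satisfies u · S₀uᵀS₀ = I; i.e. u⁻¹ = S₀uᵀS₀, so u belongs to the orthogonal group defined by the bilinear form S₀. -/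
open Matrix

/-!
`S₀` is a symmetric involution, so `X ↦ S₀ Xᵀ S₀` is an involutive anti-automorphism exchanging
`P` and `P̄`; hence `S₀ uᵀ S₀` is `u` with the coefficients of `P` and `P̄` swapped. The isotropy
of `m` and `n` makes `P` and `P̄` orthogonal idempotents, and for such a pair
`(1 + aP + bP̄)(1 + aP̄ + bP) = 1 + (a + b + ab)(P + P̄)`, which is `1` because
`(1 + a)(1 + b) = c c⁻¹ = 1`.
-/

/-- `S₀ = Σ_{k=1}^{2n+1} (-1)^{2n+2-k} E_{k,2n+2-k}`. -/
noncomputable def S0 (n : ℕ) : Matrix (Fin (2*n+1)) (Fin (2*n+1)) ℂ :=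
  fun i j => if (i : ℕ) + (j : ℕ) = 2*n then (-1 : ℂ)^(2*n+2-((i : ℕ)+1)) else 0

/-- The rank-one projector `P = |n⟩⟨m|/⟨m|n⟩`. -/
noncomputable def Pproj (n : ℕ) (nvec mvec : Fin (2*n+1) → ℂ) :
    Matrix (Fin (2*n+1)) (Fin (2*n+1)) ℂ :=
  (mvec ⬝ᵥ nvec)⁻¹ • vecMulVec nvec mvec

theorem S0_apply (n : ℕ) (i j : Fin (2*n+1)) :
    S0 n i j = if j = i.rev then (-1) ^ ((i : ℕ) + 1) else 0 := by
  have hrev : (i : ℕ) + j = 2*n ↔ j = i.rev := by rw [Fin.ext_iff, Fin.val_rev]; omega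
  exact if_congr hrev (neg_one_pow_congr (by simp only [Nat.even_iff]; omega)) rfl

theorem neg_one_pow_rev_add_one {n : ℕ} (i : Fin (2*n+1)) :
    (-1 : ℂ) ^ ((i.rev : ℕ) + 1) = (-1) ^ ((i : ℕ) + 1) :=
  neg_one_pow_congr (by rw [Fin.val_rev]; simp only [Nat.even_iff]; omega)

theorem S0_transpose (n : ℕ) : (S0 n)ᵀ = S0 n := by
  ext i j
  rw [transpose_apply, S0_apply, S0_apply]
  by_cases h : j = i.rev
  · subst h
    rw [if_pos (Fin.rev_rev i).symm, if_pos rfl, neg_one_pow_rev_add_one]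
  · rw [if_neg (fun h' => h (by rw [h', Fin.rev_rev])), if_neg h]

theorem S0_mul_self (n : ℕ) : S0 n * S0 n = 1 := by
  ext i j
  rw [mul_apply, Finset.sum_eq_single i.rev (fun k _ hk => by rw [S0_apply, if_neg hk, zero_mul])
    (by simp), S0_apply, S0_apply, if_pos rfl, Fin.rev_rev, neg_one_pow_rev_add_one, mul_ite,
    mul_zero, ← mul_pow, neg_one_mul, neg_neg, one_pow, one_apply]
  exact if_congr eq_comm rfl rfl

section Dressing

variable {K A : Type*} [CommRing K] [Ring A] [Algebra K A]

def dressing (a b : K) (P Q : A) : A := 1 + a • P + b • Q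

theorem dressing_mul_dressing_swap {P Q : A} (hP : IsIdempotentElem P) (hQ : IsIdempotentElem Q)
    (hPQ : P * Q = 0) (hQP : Q * P = 0) {a b : K} (hab : (1 + a) * (1 + b) = 1) :
    dressing a b P Q * dressing a b Q P = 1 := by
  have hsum : a + b + a * b = 0 := by linear_combination hab
  calc dressing a b P Q * dressing a b Q P
      = 1 + (a + b + a * b) • P + (a + b + a * b) • Q := by
        simp only [dressing, add_mul, mul_add, one_mul, mul_one, smul_mul_smul_comm, hP.eq, hQ.eq,
          hPQ, hQP, smul_zero]
        module
    _ = 1 := by simp [hsum]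

end Dressing

section Reflection

variable {ι R : Type*} [Fintype ι] [CommRing R]

theorem vecMulVec_mul_mul_vecMulVec (a b c d : ι → R) (M : Matrix ι ι R) :
    vecMulVec a b * M * vecMulVec c d = (b ⬝ᵥ M *ᵥ c) • vecMulVec a d := by
  rw [vecMulVec_mul, vecMulVec_mul_vecMulVec, vecMulVec_smul, dotProduct_mulVec]

variable [DecidableEq ι] {S : Matrix ι ι R}

theorem IsIdempotentElem.mul_transpose_mul (hS : S * S = 1) {P : Matrix ι ι R}
    (hP : IsIdempotentElem P) : IsIdempotentElem (S * Pᵀ * S) := by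
  rw [IsIdempotentElem, show S * Pᵀ * S * (S * Pᵀ * S) = S * (Pᵀ * (S * S) * Pᵀ) * S by
    simp only [mul_assoc], hS, mul_one, ← transpose_mul, hP.eq]

theorem mul_transpose_dressing_mul (hS : S * S = 1) (hSt : Sᵀ = S) (a b : R) (P : Matrix ι ι R) :
    S * (dressing a b P (S * Pᵀ * S))ᵀ * S = dressing a b (S * Pᵀ * S) P := by
  have hSS : ∀ X : Matrix ι ι R, S * (S * X) = X := fun X => by rw [← mul_assoc, hS, one_mul]
  simp only [dressing, transpose_add, transpose_one, transpose_smul, transpose_mul, hSt,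
    transpose_transpose, mul_add, add_mul, mul_one, hS, mul_smul_comm, smul_mul_assoc, mul_assoc,
    hSS]

end Reflection

section Projector

variable {n : ℕ} {nvec mvec : Fin (2*n+1) → ℂ}

theorem isIdempotentElem_Pproj (h : mvec ⬝ᵥ nvec ≠ 0) : IsIdempotentElem (Pproj n nvec mvec) := by
  rw [IsIdempotentElem, Pproj, smul_mul_smul_comm, vecMulVec_mul_vecMulVec, vecMulVec_smul,
    smul_smul, mul_assoc, inv_mul_cancel₀ h, mul_one]

theorem Pproj_mul_mul_transpose {M : Matrix (Fin (2*n+1)) (Fin (2*n+1)) ℂ}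
    (h : mvec ⬝ᵥ M *ᵥ mvec = 0) : Pproj n nvec mvec * M * (Pproj n nvec mvec)ᵀ = 0 := by
  simp only [Pproj, transpose_smul, transpose_vecMulVec, smul_mul_assoc, mul_smul_comm,
    vecMulVec_mul_mul_vecMulVec, h, zero_smul, smul_zero]

theorem transpose_Pproj_mul_mul {M : Matrix (Fin (2*n+1)) (Fin (2*n+1)) ℂ}
    (h : nvec ⬝ᵥ M *ᵥ nvec = 0) : (Pproj n nvec mvec)ᵀ * M * Pproj n nvec mvec = 0 := by
  simp only [Pproj, transpose_smul, transpose_vecMulVec, smul_mul_assoc, mul_smul_comm,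
    vecMulVec_mul_mul_vecMulVec, h, zero_smul, smul_zero]

end Projector

/-- under the isotropy conditions `⟨m|S₀|m⟩ = ⟨n|S₀|n⟩ = 0`, `⟨m|n⟩ ≠ 0`,
and for `c ≠ 0`, the dressing factor `u = 1 + (c−1)P + (c⁻¹−1)P̄` satisfies
`u · S₀uᵀS₀ = 1`, i.e. `u⁻¹ = S₀uᵀS₀` and `u` belongs to the orthogonal group of `S₀`. -/
theorem stmt_6 (n : ℕ) (nvec mvec : Fin (2*n+1) → ℂ) (c : ℂ) (hc : c ≠ 0)
    (hmn : mvec ⬝ᵥ nvec ≠ 0)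
    (hm : mvec ⬝ᵥ (S0 n *ᵥ mvec) = 0)
    (hn : nvec ⬝ᵥ (S0 n *ᵥ nvec) = 0) :
    (1 + (c - 1) • Pproj n nvec mvec
       + (c⁻¹ - 1) • (S0 n * (Pproj n nvec mvec)ᵀ * S0 n)) *
      (S0 n * (1 + (c - 1) • Pproj n nvec mvec
       + (c⁻¹ - 1) • (S0 n * (Pproj n nvec mvec)ᵀ * S0 n))ᵀ * S0 n) = 1 := by
  set S := S0 n
  set P := Pproj n nvec mvec
  change dressing (c - 1) (c⁻¹ - 1) P (S * Pᵀ * S) * (S * (dressing _ _ P _)ᵀ * S) = 1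
  rw [mul_transpose_dressing_mul (S0_mul_self n) (S0_transpose n)]
  have hP := isIdempotentElem_Pproj hmn
  refine dressing_mul_dressing_swap hP (hP.mul_transpose_mul (S0_mul_self n)) ?_ ?_
    (by simp [hc])
  · rw [← mul_assoc, ← mul_assoc, Pproj_mul_mul_transpose hm, zero_mul]
  · rw [mul_assoc (S * Pᵀ), mul_assoc S, ← mul_assoc Pᵀ, transpose_Pproj_mul_mul hn, mul_zero]
end

section
/- With u(λ) = I + (c(λ)−1)P + (c(λ)⁻¹−1)P̄, where c(λ) = (λ−λ⁺)/(λ−λ⁻), λ⁺ ≠ λ⁻, and P, P̄ are complementary commuting rank-one projectors with PP̄ = P̄P = 0, the limit lim_{λ→∞} λ(J − u(λ) J u(λ)⁻¹) equals (λ⁻ − λ⁺)[J, P − P̄], for any fixed matrix J. -/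
open Matrix Filter

/-- with `u(λ) = 1 + (c(λ)−1)P + (c(λ)⁻¹−1)P̄`, `c(λ) = (λ−λ⁺)/(λ−λ⁻)`,
`λ⁺ ≠ λ⁻`, and `P, P̄` commuting projectors with `PP̄ = P̄P = 0`, one has
`lim_{λ→∞} λ(J − u(λ) J u(λ)⁻¹) = (λ⁻ − λ⁺)[J, P − P̄]` (entrywise limit along `ℂ`),
where `u(λ)⁻¹ = 1 + (c(λ)⁻¹−1)P + (c(λ)−1)P̄`. -/
theorem stmt_7 (n : ℕ) (J P Pb : Matrix (Fin (2*n+1)) (Fin (2*n+1)) ℂ)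
    (hP : P * P = P) (hPb : Pb * Pb = Pb)
    (hPPb : P * Pb = 0) (hPbP : Pb * P = 0)
    (lp lm : ℂ) (hl : lp ≠ lm)
    (c : ℂ → ℂ) (hc : ∀ l, c l = (l - lp) / (l - lm)) :
    Tendsto
      (fun l : ℂ => l • (J -
        (1 + (c l - 1) • P + ((c l)⁻¹ - 1) • Pb) * J *
        (1 + ((c l)⁻¹ - 1) • P + (c l - 1) • Pb)))
      (Bornology.cobounded ℂ)
      (nhds ((lm - lp) • (J * (P - Pb) - (P - Pb) * J))) := by
  set cob := Bornology.cobounded ℂ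
  -- eventually away from lm, lp
  have hne : ∀ᶠ l : ℂ in cob, l ≠ lm ∧ l ≠ lp := by
    filter_upwards [eventually_cobounded_le_norm (max ‖lm‖ ‖lp‖ + 1)] with l hl'
    refine ⟨fun h => ?_, fun h => ?_⟩ <;> rw [h] at hl'
    · have := le_max_left ‖lm‖ ‖lp‖; linarith
    · have := le_max_right ‖lm‖ ‖lp‖; linarith
  -- inverse translations tend to 0
  have hsub : ∀ a : ℂ, Tendsto (fun l : ℂ => l - a) cob cob := by
    intro a
    rw [← tendsto_norm_atTop_iff_cobounded]
    exact tendsto_atTop_mono' _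
      ((tendsto_norm_cobounded_atTop.eventually_ge_atTop 0).mono fun l _ => norm_sub_norm_le l a)
      (tendsto_atTop_add_const_right _ (-‖a‖) tendsto_norm_cobounded_atTop)
  have hinv : ∀ a : ℂ, Tendsto (fun l : ℂ => (l - a)⁻¹) cob (nhds 0) :=
    fun a => tendsto_inv₀_cobounded.comp (hsub a)
  -- scalar limits
  have zd : Tendsto (fun l => c l - 1) cob (nhds 0) := by
    refine Tendsto.congr' ?_ (by simpa using (hinv lm).const_mul (lm - lp))
    filter_upwards [hne] with l ⟨h1, _⟩
    have h : l - lm ≠ 0 := sub_ne_zero.2 h1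
    rw [hc l]; field_simp
    try ring
  have ze : Tendsto (fun l => (c l)⁻¹ - 1) cob (nhds 0) := by
    refine Tendsto.congr' ?_ (by simpa using (hinv lp).const_mul (lp - lm))
    filter_upwards [hne] with l ⟨_, h2⟩
    have h : l - lp ≠ 0 := sub_ne_zero.2 h2
    rw [hc l, inv_div]; field_simp
    try ring
  have sd : Tendsto (fun l => l * (c l - 1)) cob (nhds (lm - lp)) := by
    have h0 : Tendsto (fun l : ℂ => (lm - lp) + ((lm - lp) * lm) * (l - lm)⁻¹) cob
        (nhds (lm - lp)) := by
      simpa using tendsto_const_nhds.add ((hinv lm).const_mul ((lm - lp) * lm))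
    refine Tendsto.congr' ?_ h0
    filter_upwards [hne] with l ⟨h1, _⟩
    have h : l - lm ≠ 0 := sub_ne_zero.2 h1
    rw [hc l]; field_simp
    try ring
  have se : Tendsto (fun l => l * ((c l)⁻¹ - 1)) cob (nhds (lp - lm)) := by
    have h0 : Tendsto (fun l : ℂ => (lp - lm) + ((lp - lm) * lp) * (l - lp)⁻¹) cob
        (nhds (lp - lm)) := by
      simpa using tendsto_const_nhds.add ((hinv lp).const_mul ((lp - lm) * lp))
    refine Tendsto.congr' ?_ h0
    filter_upwards [hne] with l ⟨_, h2⟩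
    have h : l - lp ≠ 0 := sub_ne_zero.2 h2
    rw [hc l, inv_div]; field_simp
    try ring
  -- algebraic identity
  have key : ∀ l : ℂ, l • (J -
        (1 + (c l - 1) • P + ((c l)⁻¹ - 1) • Pb) * J *
        (1 + ((c l)⁻¹ - 1) • P + (c l - 1) • Pb)) =
      -((l*(c l - 1)) • (P*J)) - (l*((c l)⁻¹ - 1)) • (Pb*J)
      - (l*((c l)⁻¹ - 1)) • (J*P) - (l*(c l - 1)) • (J*Pb)
      - ((l*(c l - 1))*((c l)⁻¹ - 1)) • (P*(J*P)) - ((l*(c l - 1))*(c l - 1)) • (P*(J*Pb))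
      - ((l*((c l)⁻¹ - 1))*((c l)⁻¹ - 1)) • (Pb*(J*P))
      - ((l*((c l)⁻¹ - 1))*(c l - 1)) • (Pb*(J*Pb)) := by
    intro l
    simp only [add_mul, mul_add, Matrix.smul_mul, Matrix.mul_smul, Matrix.one_mul,
      Matrix.mul_one, smul_smul, mul_assoc]
    module
  have T := ((((((((sd.smul_const (P*J)).neg).sub (se.smul_const (Pb*J))).sub
      (se.smul_const (J*P))).sub (sd.smul_const (J*Pb))).sub
      ((sd.mul ze).smul_const (P*(J*P)))).sub ((sd.mul zd).smul_const (P*(J*Pb)))).sub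
      ((se.mul ze).smul_const (Pb*(J*P)))).sub ((se.mul zd).smul_const (Pb*(J*Pb)))
  have hV : -((lm - lp) • (P*J)) - (lp - lm) • (Pb*J) - (lp - lm) • (J*P) - (lm - lp) • (J*Pb)
      - ((lm - lp)*0) • (P*(J*P)) - ((lm - lp)*0) • (P*(J*Pb))
      - ((lp - lm)*0) • (Pb*(J*P)) - ((lp - lm)*0) • (Pb*(J*Pb)) =
      (lm - lp) • (J * (P - Pb) - (P - Pb) * J) := by
    simp only [mul_sub, sub_mul, smul_sub]
    module
  rw [← hV]
  exact (T.congr fun l => (key l).symm)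
end
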